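/- arXiv:2512.07816 — 5 statements merged into one kernel-verified Lean document; each statement's English description precedes it below -/
import Mathlib

section
/- For every labeled monomial tree T, the excess is nonnegative: Δ(T) ≥ 0; equivalently, the number of distinct vertex labels of T is at most |E(T)|/2 + 1. -/
/-!
Every edge-label pair occurs on at least two edges, so there are at most `|E(T)|/2` distinct
pairs. Send each label other than the root's to the label pair of the edge above a vertex of
highest level carrying it; this map is injective. Hence `|V(T)| - 1 ≤ |E(T)|/2`.
-/

/-- A labeled monomial tree over labels `{1,…,N}` (encoded as `Fin N`): a finite rooted
tree of depth `t` whose vertices lie in levels `0,…,t` (root at level `t`, all leaves at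
level `0`), each vertex carrying a label, subject to the non-backtracking condition and
the condition that every edge-label pair occurs on at least two edges. -/
structure LabeledMonomialTree (N : ℕ) where
  depth : ℕ
  V : Type
  [instFintype : Fintype V]
  [instDecEq : DecidableEq V]
  root : V
  parent : V → V
  level : V → ℕ
  label : V → Fin N
  parent_root : parent root = root
  level_root : level root = depth
  level_le : ∀ v, level v ≤ depth
  level_parent : ∀ v, v ≠ root → level (parent v) = level v + 1
  leaves_at_zero : ∀ v, 1 ≤ level v → ∃ w, w ≠ root ∧ parent w = v
  nonbacktracking : ∀ w, w ≠ root → parent w ≠ root →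
    label (parent (parent w)) ≠ label w
  edges_doubled : ∀ v, v ≠ root → ∃ w, w ≠ root ∧ w ≠ v ∧
    s(label w, label (parent w)) = s(label v, label (parent v))

attribute [instance] LabeledMonomialTree.instFintype LabeledMonomialTree.instDecEq

namespace LabeledMonomialTree

variable {N : ℕ}

/-- The number of edges of `T` (each non-root vertex contributes the edge to its
parent). -/
def numEdges (T : LabeledMonomialTree N) : ℕ := Fintype.card {v : T.V // v ≠ T.root}

/-- The number of distinct vertex labels of `T`. -/
def numLabels (T : LabeledMonomialTree N) : ℕ := (Finset.univ.image T.label).card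

/-- The excess `Δ(T) = |E(T)|/2 - |V(T)| + 1`, where `|V(T)|` is the number of distinct
vertex labels. -/
def excess (T : LabeledMonomialTree N) : ℚ :=
  (T.numEdges : ℚ) / 2 - (T.numLabels : ℚ) + 1

/-- The unordered pair of endpoint labels of the edge from `v` to its parent. -/
def edgeSym (T : LabeledMonomialTree N) (v : T.V) : Sym2 (Fin N) :=
  s(T.label v, T.label (T.parent v))

/-- The number of vertices of `T` carrying the label `i`. -/
noncomputable def mult (T : LabeledMonomialTree N) (i : Fin N) : ℕ :=
  Set.ncard {v : T.V | T.label v = i}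

end LabeledMonomialTree

open Finset

namespace LabeledMonomialTree

variable {N : ℕ} (T : LabeledMonomialTree N)

theorem numEdges_eq_card : T.numEdges = #{v | v ≠ T.root} :=
  Fintype.card_subtype _

def edgeLabels : Finset (Sym2 (Fin N)) :=
  ({v | v ≠ T.root} : Finset T.V).image T.edgeSym

theorem two_mul_card_edgeLabels_le : 2 * #T.edgeLabels ≤ T.numEdges := by
  rw [numEdges_eq_card]
  refine mul_card_image_le_card _ 2 fun e he => ?_
  obtain ⟨v, hv, rfl⟩ := mem_image.mp he
  have hv : v ≠ T.root := (mem_filter.mp hv).2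
  obtain ⟨w, hw, hwv, hsym⟩ := T.edges_doubled v hv
  exact one_lt_card.mpr ⟨v, by simp [hv], w, by simpa [hw, edgeSym] using hsym, hwv.symm⟩

def IsHighest (v : T.V) : Prop :=
  ∀ u, T.label u = T.label v → T.level u ≤ T.level v

theorem exists_isHighest (v : T.V) : ∃ w, T.label w = T.label v ∧ T.IsHighest w := by
  obtain ⟨w, hw, hmax⟩ :=
    exists_max_image ({u | T.label u = T.label v} : Finset T.V) T.level ⟨v, by simp⟩
  have hw : T.label w = T.label v := (mem_filter.mp hw).2
  exact ⟨w, hw, fun u hu => hmax u (by simpa [hw] using hu)⟩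

/-- Two highest vertices with different labels `i ≠ j` and the same edge pair `{i, j}` would
each be the child of a vertex with the other's label, so each would lie strictly below the
other. -/
theorem label_eq_of_edgeSym_eq {v w : T.V} (hv : v ≠ T.root) (hw : w ≠ T.root)
    (hv_high : T.IsHighest v) (hw_high : T.IsHighest w) (h : T.edgeSym v = T.edgeSym w) :
    T.label v = T.label w := by
  by_contra hne
  obtain ⟨hvw, hwv⟩ : T.label v = T.label (T.parent w) ∧ T.label (T.parent v) = T.label w := by
    simpa [edgeSym, Sym2.eq_iff, hne] using h
  have hv_below := hw_high (T.parent v) hwv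
  have hw_below := hv_high (T.parent w) hvw.symm
  rw [T.level_parent v hv] at hv_below
  rw [T.level_parent w hw] at hw_below
  omega

theorem numLabels_le : T.numLabels ≤ #T.edgeLabels + 1 := by
  have hroot : T.label T.root ∈ univ.image T.label := mem_image_of_mem _ (mem_univ _)
  have hcard : #((univ.image T.label).erase (T.label T.root)) ≤ #T.edgeLabels := by
    refine card_le_card_of_forall_subsingleton
      (fun i e => ∃ v, v ≠ T.root ∧ T.IsHighest v ∧ T.label v = i ∧ T.edgeSym v = e)
      (fun i hi => ?_) (fun e _ => ?_)
    · obtain ⟨hi_root, hi⟩ := mem_erase.mp hi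
      obtain ⟨u, -, rfl⟩ := mem_image.mp hi
      obtain ⟨v, hv, hv_high⟩ := T.exists_isHighest u
      have hv_root : v ≠ T.root := fun h => hi_root (by rw [← hv, h])
      exact ⟨T.edgeSym v, mem_image_of_mem _ (by simpa using hv_root),
        v, hv_root, hv_high, hv, rfl⟩
    · rintro i ⟨-, v, hv, hv_high, rfl, rfl⟩ j ⟨-, w, hw, hw_high, rfl, hvw⟩
      exact T.label_eq_of_edgeSym_eq hv hw hv_high hw_high hvw.symm
  rw [card_erase_of_mem hroot] at hcard
  have := card_pos.mpr ⟨_, hroot⟩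
  unfold numLabels
  omega

end LabeledMonomialTree

/-- **Nonnegativity of the excess.** For every labeled monomial tree `T`, `Δ(T) ≥ 0`;
equivalently, the number of distinct vertex labels is at most `|E(T)|/2 + 1`. -/
theorem excess_nonneg {N : ℕ} (T : LabeledMonomialTree N) :
    0 ≤ T.excess ∧ (T.numLabels : ℚ) ≤ (T.numEdges : ℚ) / 2 + 1 := by
  have hlabels : 2 * T.numLabels ≤ T.numEdges + 2 := by
    have := T.numLabels_le
    have := T.two_mul_card_edgeLabels_le
    omega
  have hq : (T.numLabels : ℚ) ≤ (T.numEdges : ℚ) / 2 + 1 := by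
    have : (2 * T.numLabels : ℚ) ≤ T.numEdges + 2 := by exact_mod_cast hlabels
    linarith
  exact ⟨by unfold LabeledMonomialTree.excess; linarith, hq⟩
end

section
/- Let T be a labeled monomial tree and, for each label i different from the root's label, let N_i denote the number of vertices of T with label i. Then Σ_{i : N_i ≥ 3} N_i ≤ 6·Δ(T). Moreover, the number M_r of non-root vertices carrying the same label as the root satisfies M_r ≤ 2·Δ(T). -/
namespace LabeledMonomialTree

variable {N : ℕ}

lemma mult_eq_card (T : LabeledMonomialTree N) (i : Fin N) :
    T.mult i = (Finset.univ.filter (fun v => T.label v = i)).card := by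
  unfold mult
  rw [show {v : T.V | T.label v = i} = ↑(Finset.univ.filter (fun v => T.label v = i)) from by
    ext v; simp, Set.ncard_coe_finset]

lemma exists_other (T : LabeledMonomialTree N) (v : T.V) (hv : v ≠ T.root) :
    ∃ u, u ≠ v ∧ T.label u = T.label v := by
  obtain ⟨w, hw, hwv, hpair⟩ := T.edges_doubled v hv
  rw [Sym2.eq_iff] at hpair
  rcases hpair with ⟨h1, h2⟩ | ⟨h1, h2⟩
  · exact ⟨w, hwv, h1⟩
  · refine ⟨T.parent w, ?_, h2⟩
    intro hpw
    have hvroot : T.parent w ≠ T.root := by rw [hpw]; exact hv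
    have hnb := T.nonbacktracking w hw hvroot
    rw [hpw] at hnb
    exact hnb h1.symm

lemma two_le_mult (T : LabeledMonomialTree N) (i : Fin N) (hi : i ≠ T.label T.root)
    (hv : ∃ v, T.label v = i) : 2 ≤ T.mult i := by
  obtain ⟨v, hv⟩ := hv
  have hvr : v ≠ T.root := by rintro rfl; exact hi hv.symm
  obtain ⟨u, huv, hu⟩ := T.exists_other v hvr
  rw [mult_eq_card]
  have hsub : ({u, v} : Finset T.V) ⊆ Finset.univ.filter (fun x => T.label x = i) := by
    intro x hx
    simp only [Finset.mem_insert, Finset.mem_singleton] at hx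
    rcases hx with rfl | rfl
    · simp [hu.trans hv]
    · simp [hv]
  calc 2 = ({u, v} : Finset T.V).card := (Finset.card_pair huv).symm
    _ ≤ _ := Finset.card_le_card hsub


end LabeledMonomialTree

/-- **Bound on labels of high multiplicity.** For a labeled monomial tree `T`, writing
`N_i` for the number of vertices with label `i`, one has
`Σ_{i ≠ label(root), N_i ≥ 3} N_i ≤ 6 Δ(T)`, and the number `M_r` of non-root vertices
carrying the root's label satisfies `M_r ≤ 2 Δ(T)`. -/
theorem sum_high_mult_le_six_excess {N : ℕ} (T : LabeledMonomialTree N) :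
    (∑ i ∈ Finset.univ.filter
        (fun i : Fin N => i ≠ T.label T.root ∧ 3 ≤ T.mult i),
      (T.mult i : ℚ)) ≤ 6 * T.excess ∧
    (Set.ncard {v : T.V | v ≠ T.root ∧ T.label v = T.label T.root} : ℚ)
      ≤ 2 * T.excess := by
  classical
  set r := T.label T.root with hr
  set S := Finset.univ.image T.label with hS
  set f : Fin N → ℕ := fun i => (Finset.univ.filter (fun v => T.label v = i)).card with hf
  have hrS : r ∈ S := Finset.mem_image_of_mem _ (Finset.mem_univ _)
  have hL1 : 1 ≤ S.card := Finset.card_pos.mpr ⟨r, hrS⟩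
  have hcardV : Fintype.card T.V = ∑ i ∈ S, f i := by
    rw [← Finset.card_univ]
    exact Finset.card_eq_sum_card_fiberwise
      (fun v _ => Finset.mem_image_of_mem _ (Finset.mem_univ v))
  have hE : (T.numEdges : ℚ) = (Fintype.card T.V : ℚ) - 1 := by
    have h1 : T.numEdges = Fintype.card T.V - 1 := by
      unfold LabeledMonomialTree.numEdges
      rw [Fintype.card_subtype_compl, Fintype.card_subtype_eq]
    have h2 : 1 ≤ Fintype.card T.V := Fintype.card_pos_iff.mpr ⟨T.root⟩
    rw [h1, Nat.cast_sub h2, Nat.cast_one]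
  have hfr1 : 1 ≤ f r := Finset.card_pos.mpr ⟨T.root, by simp [hf, hr]⟩
  have hn : (Fintype.card T.V : ℚ) = (f r : ℚ) + ∑ i ∈ S.erase r, (f i : ℚ) := by
    rw [hcardV]
    push_cast
    exact (Finset.add_sum_erase S (fun i => (f i : ℚ)) hrS).symm
  have hErase : ((S.erase r).card : ℚ) = (S.card : ℚ) - 1 := by
    rw [Finset.card_erase_of_mem hrS, Nat.cast_sub hL1, Nat.cast_one]
  have hNL : (T.numLabels : ℚ) = (S.card : ℚ) := rfl
  have key : 2 * T.excess = (∑ i ∈ S.erase r, ((f i : ℚ) - 2)) + ((f r : ℚ) - 1) := by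
    unfold LabeledMonomialTree.excess
    rw [hNL, hE, hn, Finset.sum_sub_distrib, Finset.sum_const, nsmul_eq_mul, hErase]
    ring
  have hpos : ∀ i ∈ S.erase r, (2 : ℚ) ≤ (f i : ℚ) := by
    intro i hi
    obtain ⟨hir, hiS⟩ := Finset.mem_erase.mp hi
    obtain ⟨v, -, hv⟩ := Finset.mem_image.mp hiS
    have h2 := T.two_le_mult i hir ⟨v, hv⟩
    rw [T.mult_eq_card] at h2
    exact_mod_cast h2
  have hsumpos : (0 : ℚ) ≤ ∑ i ∈ S.erase r, ((f i : ℚ) - 2) :=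
    Finset.sum_nonneg (fun i hi => by linarith [hpos i hi])
  constructor
  · -- part 1
    set F := Finset.univ.filter (fun i : Fin N => i ≠ T.label T.root ∧ 3 ≤ T.mult i) with hF
    have hFsub : F ⊆ S.erase r := by
      intro i hi
      obtain ⟨-, hir, h3⟩ := Finset.mem_filter.mp hi
      refine Finset.mem_erase.mpr ⟨hir, ?_⟩
      rw [T.mult_eq_card] at h3
      obtain ⟨v, hv⟩ := Finset.card_pos.mp (by omega : 0 < (Finset.univ.filter (fun v => T.label v = i)).card)
      rw [Finset.mem_filter] at hv
      exact hv.2 ▸ Finset.mem_image_of_mem _ (Finset.mem_univ v)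
    have hstep1 : ∑ i ∈ F, (T.mult i : ℚ) ≤ ∑ i ∈ F, 3 * ((f i : ℚ) - 2) := by
      refine Finset.sum_le_sum (fun i hi => ?_)
      obtain ⟨-, -, h3⟩ := Finset.mem_filter.mp hi
      rw [T.mult_eq_card] at h3 ⊢
      have : (3 : ℚ) ≤ (f i : ℚ) := by exact_mod_cast h3
      have hfi : (T.mult i : ℚ) = (f i : ℚ) := by rw [T.mult_eq_card]
      linarith
    have hstep2 : ∑ i ∈ F, 3 * ((f i : ℚ) - 2) ≤ ∑ i ∈ S.erase r, 3 * ((f i : ℚ) - 2) := by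
      refine Finset.sum_le_sum_of_subset_of_nonneg hFsub (fun i hi _ => ?_)
      linarith [hpos i hi]
    have hstep3 : ∑ i ∈ S.erase r, 3 * ((f i : ℚ) - 2)
        = 3 * ∑ i ∈ S.erase r, ((f i : ℚ) - 2) := by rw [Finset.mul_sum]
    have hfr1' : (1 : ℚ) ≤ (f r : ℚ) := by exact_mod_cast hfr1
    calc ∑ i ∈ F, (T.mult i : ℚ) ≤ 3 * ∑ i ∈ S.erase r, ((f i : ℚ) - 2) := by
          rw [← hstep3]; exact hstep1.trans hstep2
      _ ≤ 6 * T.excess := by linarith [key]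
  · -- part 2
    have hset : {v : T.V | v ≠ T.root ∧ T.label v = T.label T.root}
        = ↑((Finset.univ.filter (fun v => T.label v = r)).erase T.root) := by
      ext v
      simp only [Set.mem_setOf_eq, Finset.coe_erase, Set.mem_diff, Finset.mem_coe,
        Finset.mem_filter, Finset.mem_univ, true_and, Set.mem_singleton_iff, hr]
      tauto
    have hcard : (Set.ncard {v : T.V | v ≠ T.root ∧ T.label v = T.label T.root} : ℚ)
        = (f r : ℚ) - 1 := by
      rw [hset, Set.ncard_coe_finset,
        Finset.card_erase_of_mem (by simp [hr]), Nat.cast_sub hfr1, Nat.cast_one]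
    rw [hcard]
    linarith [key]
end

section
/- Let t ≥ 1, m ≥ 1 and d_1,…,d_{t−1} ≥ 1 be integers, and let T be the unlabeled rooted tree of depth t in which the root (at level t) has exactly 2m children and every vertex at level s ∈ {1,…,t−1} has exactly d_s children (leaves at level 0). Then Wick(T) — equivalently, the number of isomorphism classes of labelings of T with excess Δ = 0, i.e. the number of Δ = 0 labeled monomial tree isomorphism classes contributing to E[(x_i^t)^{2m}] when f_s(z) = c_s z^{d_s} — equals (2m−1)!! · (2d_{t−1}−1)!!^m · (2d_{t−2}−1)!!^{m·d_{t−1}} ⋯ (2d_1−1)!!^{m·d_{t−1}⋯d_2}; that is, Wick(T) = (2m−1)!! · ∏_{s=1}^{t−1} (2d_s−1)!!^{m·∏_{r=s+1}^{t−1} d_r}. -/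
/-- A finite unlabeled rooted tree, graded by depth: every non-root vertex has a
parent one level closer to the root. -/
structure GradedTree where
  V : Type
  [instFintype : Fintype V]
  [instDecEq : DecidableEq V]
  root : V
  parent : V → V
  depthOf : V → ℕ
  parent_root : parent root = root
  depthOf_root : depthOf root = 0
  depthOf_parent : ∀ v, v ≠ root → depthOf v = depthOf (parent v) + 1

attribute [instance] GradedTree.instFintype GradedTree.instDecEq

namespace GradedTree

/-- A row-wise Wick pairing of a graded rooted tree, encoded as a fixed-point-free,
depth-preserving involution `σ` of the non-root vertices such that the parents of `v`
and `σ v` are either equal or paired with each other.  (Pairing the vertices of each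
level into unordered pairs `{v, σ v}` is exactly such an involution.) -/
def IsWickPairing (T : GradedTree) (σ : T.V → T.V) : Prop :=
  σ T.root = T.root ∧
  (∀ v, σ (σ v) = v) ∧
  (∀ v, v ≠ T.root → σ v ≠ v) ∧
  (∀ v, T.depthOf (σ v) = T.depthOf v) ∧
  (∀ v, v ≠ T.root → T.parent (σ v) = T.parent v ∨ T.parent (σ v) = σ (T.parent v))

/-- `Wick(T)`: the number of row-wise Wick pairings of `T`. -/
noncomputable def wick (T : GradedTree) : ℕ :=
  Nat.card {σ : T.V → T.V // T.IsWickPairing σ}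

/-- `T₁ ⋆ T₂`: the rooted tree obtained from the disjoint union of `T₁` and `T₂` by
identifying the two roots. -/
def star (T₁ T₂ : GradedTree) : GradedTree where
  V := T₁.V ⊕ {v : T₂.V // v ≠ T₂.root}
  root := Sum.inl T₁.root
  parent := fun v =>
    match v with
    | Sum.inl w => Sum.inl (T₁.parent w)
    | Sum.inr ⟨w, hw⟩ =>
        if hp : T₂.parent w = T₂.root then Sum.inl T₁.root
        else Sum.inr ⟨T₂.parent w, hp⟩
  depthOf := fun v =>
    match v with
    | Sum.inl w => T₁.depthOf w
    | Sum.inr ⟨w, _⟩ => T₂.depthOf w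
  parent_root := by simp [T₁.parent_root]
  depthOf_root := T₁.depthOf_root
  depthOf_parent := by
    rintro (w | ⟨w, hw⟩) hv
    · have hw' : w ≠ T₁.root := fun h => hv (by simp [h])
      simpa using T₁.depthOf_parent w hw'
    · by_cases hp : T₂.parent w = T₂.root
      · have h2 := T₂.depthOf_parent w hw
        rw [hp, T₂.depthOf_root] at h2
        simpa [hp, T₁.depthOf_root] using h2
      · simpa [hp] using T₂.depthOf_parent w hw

end GradedTree

/-!
A row-wise Wick pairing of a tree of depth `k + 1` is the same as a Wick pairing `σ` of its
truncation at depth `k` together with a perfect matching of the vertices at depth `k + 1` in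
which partners have the same parent or paired parents `{v, σ v}`. Such matchings split into
independent perfect matchings of the children of each block: the root's block has `2m`
children, giving `(2m - 1)‼`, and at a depth `k ≥ 1` every one of the `|level k| / 2` blocks
has `2 d` children, giving `(2d - 1)‼` each. Induction on the depth then yields the product
formula, since `|level k| = 2m` times the product of the degrees above.
-/

open Function Nat

abbrev Pairing (α : Type*) := {f : α → α // Involutive f ∧ ∀ a, f a ≠ a}

theorem Nat.card_eq_sum_card_fiber {α β : Type*} [Finite α] [Fintype β] (f : α → β) :
    Nat.card α = ∑ b, Nat.card {a // f a = b} := by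
  rw [← Nat.card_sigma]
  exact Nat.card_congr (Equiv.sigmaFiberEquiv f).symm

theorem Nat.card_subtype_or_disjoint {α : Type*} [Finite α] {p q : α → Prop}
    (h : ∀ a, p a → ¬ q a) :
    Nat.card {a // p a ∨ q a} = Nat.card {a // p a} + Nat.card {a // q a} := by
  classical
  rw [← Nat.card_sum]
  exact Nat.card_congr (subtypeOrEquiv p q (disjoint_iff_inf_le.mpr fun a ⟨hp, hq⟩ => h a hp hq))

theorem Nat.card_subtype_ne_and_ne_add_two {α : Type*} [Finite α] {a b : α} (hab : a ≠ b) :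
    Nat.card {c // c ≠ a ∧ c ≠ b} + 2 = Nat.card α := by
  have := Set.ncard_add_ncard_compl ({a, b} : Set α)
  rw [Set.ncard_pair hab] at this
  rw [← this, add_comm, ← Nat.card_coe_set_eq]
  congr 3; ext; simp

theorem prod_Ico_one_comp_sub {M : Type*} [CommMonoid M] (f : ℕ → M) {j t : ℕ} (hj : j ≤ t) :
    ∏ i ∈ Finset.Ico 1 j, f (t - i) = ∏ r ∈ Finset.Icc (t - j + 1) (t - 1), f r := by
  refine Finset.prod_nbij' (t - ·) (t - ·) ?_ ?_ ?_ ?_ fun i hi => rfl <;>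
    intro i hi <;> simp only [Finset.mem_Ico, Finset.mem_Icc] at hi ⊢ <;> omega

section insertPair

variable {α : Type*} [DecidableEq α]

def insertPair (a b : α) (g : {c // c ≠ a ∧ c ≠ b} → {c // c ≠ a ∧ c ≠ b}) (c : α) : α :=
  if h : c ≠ a ∧ c ≠ b then g ⟨c, h⟩ else if c = a then b else a

variable {a b : α} {g : {c // c ≠ a ∧ c ≠ b} → {c // c ≠ a ∧ c ≠ b}}

theorem insertPair_left : insertPair a b g a = b := by simp [insertPair]

theorem insertPair_right (hab : a ≠ b) : insertPair a b g b = a := by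
  simp [insertPair, hab.symm]

theorem insertPair_of_ne {c : α} (hc : c ≠ a ∧ c ≠ b) : insertPair a b g c = g ⟨c, hc⟩ := by
  simp [insertPair, hc]

end insertPair

def pairingFiberEquiv {α : Type*} [DecidableEq α] (a b : α) (hab : a ≠ b) :
    {f : Pairing α // f.1 a = b} ≃ Pairing {c // c ≠ a ∧ c ≠ b} where
  toFun f :=
    have hf : ∀ c : {c // c ≠ a ∧ c ≠ b}, f.1.1 c ≠ a ∧ f.1.1 c ≠ b := fun c =>
      ⟨fun h => c.2.2 (by rw [← f.1.2.1 c.1, h, f.2]),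
        fun h => c.2.1 (f.1.2.1.injective (h.trans f.2.symm))⟩
    ⟨fun c => ⟨f.1.1 c, hf c⟩, fun c => Subtype.ext (f.1.2.1 c),
      fun c h => f.1.2.2 c (congrArg Subtype.val h)⟩
  invFun g := ⟨⟨insertPair a b g.1, fun c => by
      by_cases hc : c ≠ a ∧ c ≠ b
      · rw [insertPair_of_ne hc, insertPair_of_ne (g.1 ⟨c, hc⟩).2, g.2.1]
      · obtain rfl | rfl : c = a ∨ c = b := by tauto
        · rw [insertPair_left, insertPair_right hab]
        · rw [insertPair_right hab, insertPair_left],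
    fun c => by
      by_cases hc : c ≠ a ∧ c ≠ b
      · rw [insertPair_of_ne hc]; exact fun h => g.2.2 _ (Subtype.ext h)
      · obtain rfl | rfl : c = a ∨ c = b := by tauto
        · rw [insertPair_left]; exact hab.symm
        · rw [insertPair_right hab]; exact hab⟩, insertPair_left⟩
  left_inv f := by
    refine Subtype.ext (Subtype.ext (funext fun c => ?_))
    by_cases hc : c ≠ a ∧ c ≠ b
    · exact insertPair_of_ne hc
    · obtain rfl | rfl : c = a ∨ c = b := by tauto
      · exact insertPair_left.trans f.2.symm
      · exact (insertPair_right hab).trans ((f.1.2.1 a).symm.trans (congrArg f.1.1 f.2))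
  right_inv g := Subtype.ext (funext fun c => Subtype.ext (insertPair_of_ne c.2))

theorem card_pairing {α : Type*} [Finite α] {n : ℕ} (h : Nat.card α = 2 * n) :
    Nat.card (Pairing α) = (2 * n - 1)‼ := by
  induction n generalizing α with
  | zero =>
    have : IsEmpty α := Finite.card_eq_zero_iff.mp h
    exact Nat.card_eq_one_iff_unique.mpr ⟨inferInstance, ⟨⟨id, isEmptyElim, isEmptyElim⟩⟩⟩
  | succ n ih =>
    classical
    have := Fintype.ofFinite α
    obtain ⟨a⟩ : Nonempty α := Nat.card_pos_iff.mp (by omega) |>.1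
    have hfiber : ∀ b ∈ ({a}ᶜ : Finset α),
        Nat.card {f : Pairing α // f.1 a = b} = (2 * n - 1)‼ := fun b hb => by
      have hab : a ≠ b := Ne.symm (by simpa using hb)
      rw [Nat.card_congr (pairingFiberEquiv a b hab)]
      exact ih (by have := Nat.card_subtype_ne_and_ne_add_two hab; omega)
    have hempty : IsEmpty {f : Pairing α // f.1 a = a} := ⟨fun f => f.1.2.2 a f.2⟩
    rw [Nat.card_eq_sum_card_fiber (fun f : Pairing α => f.1 a),
      Fintype.sum_eq_add_sum_compl a, Nat.card_of_isEmpty, Finset.sum_congr rfl hfiber,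
      Finset.sum_const, Finset.card_compl, Finset.card_singleton, ← Nat.card_eq_fintype_card, h,
      smul_eq_mul, show 2 * (n + 1) - 1 = 2 * n + 1 by omega, Nat.doubleFactorial_add_one]
    simp

def fiberwisePairingEquiv {α β : Type*} (p : α → β) :
    {f : Pairing α // ∀ a, p (f.1 a) = p a} ≃ ∀ j, Pairing {a // p a = j} where
  toFun f j := ⟨fun a => ⟨f.1.1 a, (f.2 a).trans a.2⟩, fun a => Subtype.ext (f.1.2.1 a),
    fun a h => f.1.2.2 a (congrArg Subtype.val h)⟩
  invFun g :=
    have transport : ∀ j (a : {a // p a = j}), ((g (p a)).1 ⟨a, rfl⟩).1 = ((g j).1 a).1 := by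
      rintro _ ⟨a, rfl⟩; rfl
    ⟨⟨fun a => ((g (p a)).1 ⟨a, rfl⟩).1, fun a => by
        simp only
        rw [transport _ ((g (p a)).1 ⟨a, rfl⟩), (g (p a)).2.1],
      fun a h => (g (p a)).2.2 ⟨a, rfl⟩ (Subtype.ext h)⟩,
      fun a => ((g (p a)).1 ⟨a, rfl⟩).2⟩
  left_inv f := rfl
  right_inv g := by
    funext j
    ext ⟨a, rfl⟩
    rfl

theorem card_pairing_fiberwise {α β : Type*} [Finite α] [Finite β] (p : α → β) {n : ℕ}
    (h : ∀ j, Nat.card {a // p a = j} = 2 * n) :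
    Nat.card {f : Pairing α // ∀ a, p (f.1 a) = p a} = (2 * n - 1)‼ ^ Nat.card β := by
  have := Fintype.ofFinite β
  rw [Nat.card_congr (fiberwisePairingEquiv p), Nat.card_pi,
    Finset.prod_congr rfl fun j _ => card_pairing (h j), Finset.prod_const, Finset.card_univ,
    Nat.card_eq_fintype_card]

def pairSetoid {β : Type*} {f : β → β} (hf : Involutive f) : Setoid β where
  r x y := x = y ∨ x = f y
  iseqv.refl _ := .inl rfl
  iseqv.symm := by rintro x y (rfl | rfl) <;> simp [hf _]
  iseqv.trans := by rintro x y z (rfl | rfl) (rfl | rfl) <;> simp [hf _]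

theorem pairSetoid_mk_eq_mk {β : Type*} {f : β → β} (hf : Involutive f) {x y : β} :
    (Quotient.mk (pairSetoid hf) x = Quotient.mk _ y) ↔ x = y ∨ x = f y :=
  Quotient.eq

theorem card_fiber_quotient_pairSetoid {α β : Type*} [Finite α] (up : α → β) (ρ : Pairing β)
    {n : ℕ} (h : ∀ b, Nat.card {a // up a = b} = n) (q : Quotient (pairSetoid ρ.2.1)) :
    Nat.card {a // Quotient.mk _ (up a) = q} = 2 * n := by
  induction q using Quotient.inductionOn with | h b => ?_
  have hdisj : ∀ a, up a = b → ¬ up a = ρ.1 b := fun a h1 h2 => ρ.2.2 b (h2.symm.trans h1)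
  rw [Nat.card_congr (Equiv.subtypeEquivRight fun a => pairSetoid_mk_eq_mk _),
    Nat.card_subtype_or_disjoint hdisj, h, h, two_mul]

theorem card_eq_two_mul_card_quotient_pairSetoid {β : Type*} [Finite β] (ρ : Pairing β) :
    Nat.card β = 2 * Nat.card (Quotient (pairSetoid ρ.2.1)) := by
  have := Fintype.ofFinite (Quotient (pairSetoid ρ.2.1))
  calc Nat.card β = ∑ q, Nat.card {b // Quotient.mk _ b = q} := Nat.card_eq_sum_card_fiber _
    _ = ∑ _q, 2 * 1 := Finset.sum_congr rfl fun q _ =>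
      card_fiber_quotient_pairSetoid id ρ (fun b => by simp) q
    _ = _ := by simp [Nat.card_eq_fintype_card, mul_comm]

theorem card_pairing_compatible {α β : Type*} [Finite α] [Finite β] (up : α → β)
    (ρ : Pairing β) {n : ℕ} (h : ∀ b, Nat.card {a // up a = b} = n) :
    Nat.card {τ : Pairing α // ∀ a, up (τ.1 a) = up a ∨ up (τ.1 a) = ρ.1 (up a)} =
      (2 * n - 1)‼ ^ (Nat.card β / 2) := by
  have := Finite.of_surjective (Quotient.mk (pairSetoid ρ.2.1)) Quotient.mk_surjective
  rw [card_eq_two_mul_card_quotient_pairSetoid ρ, Nat.mul_div_cancel_left _ two_pos,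
    ← card_pairing_fiberwise _ (card_fiber_quotient_pairSetoid up ρ h)]
  exact Nat.card_congr (Equiv.subtypeEquivRight fun τ =>
    forall_congr' fun a => (pairSetoid_mk_eq_mk _).symm)

namespace GradedTree

variable (T : GradedTree)

noncomputable def childCount (v : T.V) : ℕ := Nat.card {w : T.V // T.parent w = v ∧ w ≠ T.root}

abbrev Level (ℓ : ℕ) : Type := {v : T.V // T.depthOf v = ℓ}

variable {T}

theorem depthOf_parent_le (v : T.V) : T.depthOf (T.parent v) ≤ T.depthOf v := by
  by_cases hv : v = T.root
  · rw [hv, T.parent_root]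
  · exact (T.depthOf_parent v hv).symm ▸ Nat.le_succ _

theorem eq_root_of_depthOf_eq_zero {v : T.V} (hv : T.depthOf v = 0) : v = T.root := by
  by_contra h
  have := T.depthOf_parent v h
  omega

theorem ne_root_of_depthOf_ne_zero {v : T.V} (hv : T.depthOf v ≠ 0) : v ≠ T.root :=
  fun h => hv (h ▸ T.depthOf_root)

theorem depthOf_parent_of_depthOf_eq_succ {v : T.V} {ℓ : ℕ} (hv : T.depthOf v = ℓ + 1) :
    T.depthOf (T.parent v) = ℓ := by
  have := T.depthOf_parent v (ne_root_of_depthOf_ne_zero (by omega))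
  omega

variable (T)

def levelParent {ℓ : ℕ} (w : T.Level (ℓ + 1)) : T.Level ℓ :=
  ⟨T.parent w.1, depthOf_parent_of_depthOf_eq_succ w.2⟩

instance : Unique (T.Level 0) where
  default := ⟨T.root, T.depthOf_root⟩
  uniq v := Subtype.ext (eq_root_of_depthOf_eq_zero v.2)

theorem card_fiber_levelParent {ℓ : ℕ} (u : T.Level ℓ) :
    Nat.card {w : T.Level (ℓ + 1) // T.levelParent w = u} = T.childCount u.1 :=
  Nat.card_congr {
    toFun w := ⟨w.1.1, congrArg Subtype.val w.2, ne_root_of_depthOf_ne_zero (by simp [w.1.2])⟩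
    invFun w := ⟨⟨w.1, by rw [T.depthOf_parent w.1 w.2.2, w.2.1, u.2]⟩, Subtype.ext w.2.1⟩
    left_inv _ := rfl
    right_inv _ := rfl }

theorem card_level_succ (ℓ : ℕ) :
    Nat.card (T.Level (ℓ + 1)) = ∑ u : T.Level ℓ, T.childCount u.1 := by
  rw [Nat.card_eq_sum_card_fiber T.levelParent]
  exact Finset.sum_congr rfl fun u _ => T.card_fiber_levelParent u

theorem card_level_one : Nat.card (T.Level 1) = T.childCount T.root := by
  rw [card_level_succ, Fintype.sum_unique]
  rfl

theorem card_level {t m : ℕ} {c : ℕ → ℕ} (hroot : T.childCount T.root = 2 * m)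
    (hchild : ∀ v, v ≠ T.root → T.depthOf v < t → T.childCount v = c (T.depthOf v))
    {ℓ : ℕ} (hℓ : 1 ≤ ℓ) (hℓt : ℓ ≤ t) :
    Nat.card (T.Level ℓ) = 2 * m * ∏ i ∈ Finset.Ico 1 ℓ, c i := by
  induction ℓ, hℓ using Nat.le_induction with
  | base => rw [card_level_one, hroot]; simp
  | succ ℓ hℓ ih =>
    have hc : ∀ u : T.Level ℓ, T.childCount u.1 = c ℓ := fun u =>
      (hchild u.1 (ne_root_of_depthOf_ne_zero (by omega)) (by omega)).trans (congrArg c u.2)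
    rw [card_level_succ, Finset.sum_congr rfl fun u _ => hc u, Finset.sum_const,
      Finset.card_univ, ← Nat.card_eq_fintype_card, ih (by omega), smul_eq_mul,
      Finset.prod_Ico_succ_top hℓ, mul_assoc]

def truncate (k : ℕ) : GradedTree where
  V := {v : T.V // T.depthOf v ≤ k}
  root := ⟨T.root, T.depthOf_root ▸ k.zero_le⟩
  parent v := ⟨T.parent v.1, (depthOf_parent_le v.1).trans v.2⟩
  depthOf v := T.depthOf v.1
  parent_root := Subtype.ext T.parent_root
  depthOf_root := T.depthOf_root
  depthOf_parent v hv := T.depthOf_parent v.1 fun h => hv (Subtype.ext h)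

variable {T}

theorem childCount_truncate {k : ℕ} (v : (T.truncate k).V) (hv : T.depthOf v.1 < k) :
    (T.truncate k).childCount v = T.childCount v.1 :=
  Nat.card_congr {
    toFun w := ⟨w.1.1, congrArg Subtype.val w.2.1, fun h => w.2.2 (Subtype.ext h)⟩
    invFun w := ⟨⟨w.1, by rw [T.depthOf_parent w.1 w.2.2, w.2.1]; omega⟩,
      Subtype.ext w.2.1, fun h => w.2.2 (congrArg Subtype.val h)⟩
    left_inv _ := rfl
    right_inv _ := rfl }

namespace IsWickPairing

variable {σ : T.V → T.V} (hσ : T.IsWickPairing σ)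
include hσ

theorem map_root : σ T.root = T.root := hσ.1

theorem involutive : Involutive σ := hσ.2.1

theorem ne_self {v : T.V} (hv : v ≠ T.root) : σ v ≠ v := hσ.2.2.1 v hv

theorem depthOf_eq (v : T.V) : T.depthOf (σ v) = T.depthOf v := hσ.2.2.2.1 v

theorem parent_eq {v : T.V} (hv : v ≠ T.root) :
    T.parent (σ v) = T.parent v ∨ T.parent (σ v) = σ (T.parent v) := hσ.2.2.2.2 v hv

def restrict (p : ℕ → Prop) : {v // p (T.depthOf v)} → {v // p (T.depthOf v)} :=
  fun v => ⟨σ v.1, (hσ.depthOf_eq v.1).symm ▸ v.2⟩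

theorem restrict_truncate (k : ℕ) : (T.truncate k).IsWickPairing (hσ.restrict (· ≤ k)) :=
  ⟨Subtype.ext hσ.map_root, fun v => Subtype.ext (hσ.involutive v.1),
    fun _ hv h => hσ.ne_self (fun e => hv (Subtype.ext e)) (congrArg Subtype.val h),
    fun v => hσ.depthOf_eq v.1,
    fun _ hv => (hσ.parent_eq fun e => hv (Subtype.ext e)).imp Subtype.ext Subtype.ext⟩

end IsWickPairing

theorem wick_eq_one_of_subsingleton [Subsingleton T.V] : T.wick = 1 := by
  refine Nat.card_eq_one_iff_unique.mpr ⟨inferInstance, ⟨⟨id, ?_⟩⟩⟩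
  exact ⟨rfl, fun _ => rfl, fun v hv => (hv (Subsingleton.elim _ _)).elim, fun _ => rfl,
    fun _ _ => .inl rfl⟩

variable (T) in
abbrev LevelExtension (k : ℕ) (σ : (T.truncate k).V → (T.truncate k).V) : Type :=
  {τ : Pairing (T.Level (k + 1)) // ∀ w, T.parent (τ.1 w).1 = T.parent w.1 ∨
    T.parent (τ.1 w).1 = (σ ⟨T.parent w.1, (T.levelParent w).2.le⟩).1}

variable {k : ℕ}

def IsWickPairing.levelExtension {σ : T.V → T.V} (hσ : T.IsWickPairing σ) :
    T.LevelExtension k (hσ.restrict (· ≤ k)) :=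
  have hne : ∀ w : T.Level (k + 1), w.1 ≠ T.root := fun w =>
    ne_root_of_depthOf_ne_zero (by simp [w.2])
  ⟨⟨hσ.restrict (· = k + 1), fun w => Subtype.ext (hσ.involutive w.1),
    fun w h => hσ.ne_self (hne w) (congrArg Subtype.val h)⟩, fun w => hσ.parent_eq (hne w)⟩

/-- The last branch is never taken on a tree of depth at most `k + 1`. -/
def glue (σ : (T.truncate k).V → (T.truncate k).V) (τ : T.Level (k + 1) → T.Level (k + 1))
    (v : T.V) : T.V :=
  if h : T.depthOf v ≤ k then (σ ⟨v, h⟩).1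
  else if h' : T.depthOf v = k + 1 then (τ ⟨v, h'⟩).1 else v

section glue

variable {σ : (T.truncate k).V → (T.truncate k).V} {τ : T.Level (k + 1) → T.Level (k + 1)}

theorem glue_of_le {v : T.V} (h : T.depthOf v ≤ k) : glue σ τ v = (σ ⟨v, h⟩).1 := dif_pos h

theorem glue_of_eq {v : T.V} (h : T.depthOf v = k + 1) : glue σ τ v = (τ ⟨v, h⟩).1 := by
  rw [glue, dif_neg (by omega), dif_pos h]

theorem isWickPairing_glue (hdepth : ∀ v, T.depthOf v ≤ k + 1)
    (hσ : (T.truncate k).IsWickPairing σ) (τ : T.LevelExtension k σ) :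
    T.IsWickPairing (glue σ τ.1.1) := by
  obtain ⟨⟨τ, hτ_inv, hτ_ne⟩, hτ_parent⟩ := τ
  have hsplit : ∀ v, T.depthOf v ≤ k ∨ T.depthOf v = k + 1 := fun v => by
    have := hdepth v; omega
  refine ⟨?_, fun v => ?_, fun v hv => ?_, fun v => ?_, fun v hv => ?_⟩
  · rw [glue_of_le (by simp [T.depthOf_root])]
    exact congrArg Subtype.val hσ.map_root
  · rcases hsplit v with h | h
    · rw [glue_of_le h, glue_of_le (σ ⟨v, h⟩).2]
      exact congrArg Subtype.val (hσ.involutive _)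
    · rw [glue_of_eq h, glue_of_eq (τ ⟨v, h⟩).2]
      exact congrArg Subtype.val (hτ_inv _)
  · rcases hsplit v with h | h
    · rw [glue_of_le h]
      exact fun e => hσ.ne_self (v := ⟨v, h⟩) (fun e' => hv (congrArg Subtype.val e'))
        (Subtype.ext e)
    · rw [glue_of_eq h]
      exact fun e => hτ_ne _ (Subtype.ext e)
  · rcases hsplit v with h | h
    · rw [glue_of_le h]
      exact hσ.depthOf_eq ⟨v, h⟩
    · rw [glue_of_eq h, (τ ⟨v, h⟩).2, h]
  · rcases hsplit v with h | h
    · rw [glue_of_le h, glue_of_le ((depthOf_parent_le v).trans h)]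
      exact (hσ.parent_eq (v := ⟨v, h⟩) fun e => hv (congrArg Subtype.val e)).imp
        (congrArg Subtype.val) (congrArg Subtype.val)
    · rw [glue_of_eq h, glue_of_le (depthOf_parent_of_depthOf_eq_succ h).le]
      exact hτ_parent ⟨v, h⟩

end glue

def wickEquivSigmaLevelExtension (hdepth : ∀ v, T.depthOf v ≤ k + 1) :
    {σ // T.IsWickPairing σ} ≃
      Σ σ : {σ // (T.truncate k).IsWickPairing σ}, T.LevelExtension k σ.1 where
  toFun σ := ⟨⟨_, σ.2.restrict_truncate k⟩, σ.2.levelExtension⟩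
  invFun p := ⟨glue p.1.1 p.2.1.1, isWickPairing_glue hdepth p.1.2 p.2⟩
  left_inv σ := by
    refine Subtype.ext (funext fun v => ?_)
    rcases (show T.depthOf v ≤ k ∨ T.depthOf v = k + 1 by have := hdepth v; omega) with h | h
    · exact glue_of_le h
    · exact glue_of_eq h
  right_inv p := Sigma.subtype_ext (Subtype.ext (funext fun v => Subtype.ext (glue_of_le v.2)))
    (Subtype.ext (funext fun w => Subtype.ext (glue_of_eq w.2)))

theorem wick_eq_wick_truncate_mul (hdepth : ∀ v, T.depthOf v ≤ k + 1) {N : ℕ}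
    (hN : ∀ σ, (T.truncate k).IsWickPairing σ → Nat.card (T.LevelExtension k σ) = N) :
    T.wick = (T.truncate k).wick * N := by
  have := Fintype.ofFinite {σ // (T.truncate k).IsWickPairing σ}
  rw [wick, Nat.card_congr (wickEquivSigmaLevelExtension hdepth), Nat.card_sigma,
    Finset.sum_congr rfl fun σ _ => hN σ.1 σ.2, Finset.sum_const, Finset.card_univ, smul_eq_mul,
    wick, Nat.card_eq_fintype_card]

theorem wick_of_depthOf_le_one (hdepth : ∀ v, T.depthOf v ≤ 1) {m : ℕ}
    (hroot : T.childCount T.root = 2 * m) : T.wick = (2 * m - 1)‼ := by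
  have : Subsingleton (T.truncate 0).V := ⟨fun v w => Subtype.ext
    ((eq_root_of_depthOf_eq_zero (Nat.le_zero.mp v.2)).trans
      (eq_root_of_depthOf_eq_zero (Nat.le_zero.mp w.2)).symm)⟩
  rw [wick_eq_wick_truncate_mul hdepth (N := (2 * m - 1)‼), wick_eq_one_of_subsingleton, one_mul]
  intro σ _
  have hparent : ∀ τ : Pairing (T.Level 1), ∀ w, T.parent (τ.1 w).1 = T.parent w.1 :=
    fun τ w => congrArg Subtype.val (Subsingleton.elim (T.levelParent (τ.1 w)) (T.levelParent w))
  rw [Nat.card_congr (Equiv.subtypeUnivEquiv fun τ w => .inl (hparent τ w))]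
  exact card_pairing (T.card_level_one.trans hroot)

theorem wick_eq_wick_truncate_mul_pow (hk : 1 ≤ k) (hdepth : ∀ v, T.depthOf v ≤ k + 1)
    {c : ℕ} (hc : ∀ v, T.depthOf v = k → T.childCount v = c) :
    T.wick = (T.truncate k).wick * (2 * c - 1)‼ ^ (Nat.card (T.Level k) / 2) := by
  refine wick_eq_wick_truncate_mul hdepth fun σ hσ => ?_
  have hne : ∀ v : T.Level k, (⟨v.1, v.2.le⟩ : (T.truncate k).V) ≠ (T.truncate k).root :=
    fun v h => by
      have := congrArg (T.depthOf ·.1) h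
      simp only [truncate, v.2, T.depthOf_root] at this
      omega
  let ρ : Pairing (T.Level k) :=
    ⟨fun v => ⟨(σ ⟨v.1, v.2.le⟩).1, (hσ.depthOf_eq _).trans v.2⟩,
      fun v => Subtype.ext (congrArg Subtype.val (hσ.involutive ⟨v.1, v.2.le⟩) :),
      fun v h => hσ.ne_self (hne v) (Subtype.ext (congrArg Subtype.val h :))⟩
  rw [← card_pairing_compatible T.levelParent ρ fun u =>
    (T.card_fiber_levelParent u).trans (hc u.1 u.2)]
  exact Nat.card_congr (Equiv.subtypeEquivRight fun τ => forall_congr' fun w => by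
    simp only [Subtype.ext_iff]; rfl)

theorem wick_eq_of_childCount {t m : ℕ} {c : ℕ → ℕ} (hdepth : ∀ v, T.depthOf v ≤ t)
    (hroot : T.childCount T.root = 2 * m)
    (hchild : ∀ v, v ≠ T.root → T.depthOf v < t → T.childCount v = c (T.depthOf v)) :
    T.wick = (2 * m - 1)‼ *
      ∏ j ∈ Finset.Ico 1 t, (2 * c j - 1)‼ ^ (m * ∏ i ∈ Finset.Ico 1 j, c i) := by
  induction t generalizing T with
  | zero => simp [wick_of_depthOf_le_one (fun v => (hdepth v).trans zero_le_one) hroot]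
  | succ k ih =>
    obtain rfl | hk := Nat.eq_zero_or_pos k
    · simp [wick_of_depthOf_le_one hdepth hroot]
    have hroot' : (T.truncate k).childCount (T.truncate k).root = 2 * m :=
      (childCount_truncate _ (T.depthOf_root ▸ hk)).trans hroot
    have hchild' : ∀ v, v ≠ (T.truncate k).root → T.depthOf v.1 < k →
        (T.truncate k).childCount v = c (T.depthOf v.1) := fun v hv hvk =>
      (childCount_truncate v hvk).trans (hchild v.1 (fun e => hv (Subtype.ext e)) (by omega))
    have hc : ∀ v, T.depthOf v = k → T.childCount v = c k := fun v hv =>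
      (hchild v (ne_root_of_depthOf_ne_zero (by omega)) (by omega)).trans (congrArg c hv)
    rw [wick_eq_wick_truncate_mul_pow hk hdepth hc, ih (T := T.truncate k) (fun v => v.2) hroot'
      hchild', T.card_level hroot hchild hk k.le_succ, mul_assoc 2 m,
      Nat.mul_div_cancel_left _ two_pos, Finset.prod_Ico_succ_top hk]
    ring

end GradedTree

theorem wick_regular_tree_general (t m : ℕ)
    (d : ℕ → ℕ)
    (T : GradedTree)
    (hdepth : ∀ v : T.V, T.depthOf v ≤ t)
    (hroot : Nat.card {w : T.V // T.parent w = T.root ∧ w ≠ T.root} = 2 * m)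
    (hchild : ∀ v : T.V, v ≠ T.root → T.depthOf v < t →
      Nat.card {w : T.V // T.parent w = v ∧ w ≠ T.root} = d (t - T.depthOf v)) :
    T.wick = Nat.doubleFactorial (2 * m - 1) *
      ∏ s ∈ Finset.Icc 1 (t - 1),
        (Nat.doubleFactorial (2 * d s - 1)) ^ (m * ∏ r ∈ Finset.Icc (s + 1) (t - 1), d r) := by
  -- `wick_eq_of_childCount` indexes the levels by their depth `j = t - s`.
  have reflect := prod_Ico_one_comp_sub
    (fun s => (2 * d s - 1)‼ ^ (m * ∏ r ∈ Finset.Icc (s + 1) (t - 1), d r)) (le_refl t)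
  rw [Nat.sub_self, zero_add] at reflect
  rw [GradedTree.wick_eq_of_childCount (c := fun j => d (t - j)) hdepth hroot hchild, ← reflect]
  exact congrArg _ (Finset.prod_congr rfl fun j hj => by
    rw [prod_Ico_one_comp_sub d (Finset.mem_Ico.mp hj).2.le])

/-- **Wick pairings of the regular monomial tree.**
Let `T` be the rooted tree of depth `t` in which the root (at level `t`, i.e. depth `0`
from the root) has exactly `2m` children and every vertex at level `s ∈ {1,…,t-1}`
(i.e. at depth `t - s` from the root) has exactly `d_s` children, with all leaves at
level `0` (depth `t`).  Then the number of row-wise Wick pairings of `T` — equivalently,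
the number of isomorphism classes of labelings of `T` with excess `Δ = 0`, i.e. the
number of `Δ = 0` labeled monomial trees contributing to `E[(x_i^t)^{2m}]` for the
monomial nonlinearities `f_s(z) = c_s z^{d_s}` — equals
`(2m-1)!! ∏_{s=1}^{t-1} (2 d_s - 1)!!^{m ∏_{r=s+1}^{t-1} d_r}`. -/
theorem wick_regular_tree (t m : ℕ) (ht : 1 ≤ t) (hm : 1 ≤ m)
    (d : ℕ → ℕ) (hd : ∀ s, 1 ≤ s → s ≤ t - 1 → 1 ≤ d s)
    (T : GradedTree)
    (hdepth : ∀ v : T.V, T.depthOf v ≤ t)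
    (hroot : Nat.card {w : T.V // T.parent w = T.root ∧ w ≠ T.root} = 2 * m)
    (hchild : ∀ v : T.V, v ≠ T.root → T.depthOf v < t →
      Nat.card {w : T.V // T.parent w = v ∧ w ≠ T.root} = d (t - T.depthOf v)) :
    T.wick = Nat.doubleFactorial (2 * m - 1) *
      ∏ s ∈ Finset.Icc 1 (t - 1),
        (Nat.doubleFactorial (2 * d s - 1)) ^ (m * ∏ r ∈ Finset.Icc (s + 1) (t - 1), d r) :=
  wick_regular_tree_general t m d T hdepth hroot hchild
end

section
/- For every finite rooted tree T (graded by depth) with at least one edge, Wick(T ⋆ T) ≥ 1: overlaying T on a disjoint copy of itself and pairing each vertex with its mirror copy yields a valid row-wise Wick pairing. In particular, each basis tree T satisfies ⟨T, T⟩ > 0 for the bilinear form ⟨T₁, T₂⟩ := Wick(T₁ ⋆ T₂) on the real span of rooted trees with a common root. -/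
/-- **Positivity of the Wick inner product on basis trees.**
For every finite rooted graded tree `T` with at least one edge (i.e. with some
non-root vertex), `Wick(T ⋆ T) ≥ 1`: overlaying `T` on a disjoint copy of itself
gives a valid row-wise Wick pairing.  In particular the bilinear form
`⟨T₁, T₂⟩ = Wick(T₁ ⋆ T₂)` satisfies `⟨T, T⟩ > 0` on basis trees. -/
theorem one_le_wick_star_self (T : GradedTree) (h : ∃ v : T.V, v ≠ T.root) :
    1 ≤ (T.star T).wick ∧ 0 < (T.star T).wick := by
  classical
  set S := T.star T
  let σ : S.V → S.V := fun v =>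
    match v with
    | Sum.inl w => if hw : w = T.root then Sum.inl T.root else Sum.inr ⟨w, hw⟩
    | Sum.inr ⟨w, _⟩ => Sum.inl w
  have hσ : S.IsWickPairing σ := by
    refine ⟨by simp [σ, S, GradedTree.star], ?_, ?_, ?_, ?_⟩
    · rintro (w | ⟨w, hw⟩)
      · by_cases hw : w = T.root <;> simp [σ, S, GradedTree.star, hw]
      · simp [σ, S, GradedTree.star, hw]
    · rintro (w | ⟨w, hw⟩) hv
      · have hw : w ≠ T.root := fun h => hv (by simp [S, GradedTree.star, h])
        simp [σ, S, GradedTree.star, hw]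
      · simp [σ, S, GradedTree.star]
    · rintro (w | ⟨w, hw⟩)
      · by_cases hw : w = T.root <;>
          simp [σ, S, hw, GradedTree.star, T.depthOf_root]
      · simp [σ, S, GradedTree.star]
    · rintro (w | ⟨w, hw⟩) hv
      · have hw : w ≠ T.root := fun h => hv (by simp [S, GradedTree.star, h])
        by_cases hp : T.parent w = T.root
        · left; simp [σ, S, hw, GradedTree.star, hp]
        · right; simp [σ, S, hw, GradedTree.star, hp]
      · by_cases hp : T.parent w = T.root
        · left; simp [σ, S, GradedTree.star, hp]
        · right; simp [σ, S, GradedTree.star, hp]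
  have hpos : 0 < S.wick := by
    have : Nonempty {σ : S.V → S.V // S.IsWickPairing σ} := ⟨⟨σ, hσ⟩⟩
    have : Finite {σ : S.V → S.V // S.IsWickPairing σ} := Subtype.finite
    exact Nat.card_pos
  exact ⟨hpos, hpos⟩
end

section
/- Let T be a finite rooted tree (graded by depth) whose root has d ≥ 1 children, and for 1 ≤ a ≤ d let T^{(a)} denote the rooted tree consisting of the root of T, its a-th child, and all descendants of that child. Then Wick(T) = Σ_π ∏_{{a,b}∈π} Wick(T^{(a)} ⋆ T^{(b)}), where the sum runs over all perfect matchings π of {1,…,d} (so that Wick(T) = 0 when d is odd). This recursion is exactly the statement that the state evolution functional L, defined recursively via Wick's theorem for Gaussian vectors with covariance Σ_{ab} = L(T^{(a)} ⋆ T^{(b)}), coincides with the Wick pairing count: L(T) = Wick(T). -/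
namespace GradedTree

/-- `v` is a descendant of `u` (possibly `v = u`): iterating the parent map from `v`
reaches `u`. -/
def Desc (T : GradedTree) (u v : T.V) : Prop := ∃ k : ℕ, T.parent^[k] v = u

/-- For a child `c` of the root, the rooted tree consisting of the root, `c`, and all
descendants of `c`. -/
noncomputable def subtreeAt (T : GradedTree) (c : T.V) (hc : T.parent c = T.root) :
    GradedTree where
  V := {v : T.V // v = T.root ∨ T.Desc c v}
  instFintype := @Subtype.fintype _ _ (Classical.decPred _) _
  instDecEq := Subtype.instDecidableEq
  root := ⟨T.root, Or.inl rfl⟩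
  parent := fun v => ⟨T.parent v.1, by
    rcases v with ⟨v, hv | hv⟩
    · exact Or.inl (by simp only [hv, T.parent_root])
    · rcases hv with ⟨k, hk⟩
      cases k with
      | zero =>
          have hvc : v = c := by simpa using hk
          exact Or.inl (by simp only [hvc, hc])
      | succ k' =>
          exact Or.inr ⟨k', by rw [← Function.iterate_succ_apply]; exact hk⟩⟩
  depthOf := fun v => T.depthOf v.1
  parent_root := Subtype.ext T.parent_root
  depthOf_root := T.depthOf_root
  depthOf_parent := by
    rintro ⟨v, hv⟩ hne
    exact T.depthOf_parent v (fun h => hne (Subtype.ext h))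

end GradedTree
namespace WickProof
open GradedTree

variable {T : GradedTree}

lemma depth_pos {v : T.V} (hv : v ≠ T.root) : 1 ≤ T.depthOf v := by
  rw [T.depthOf_parent v hv]; omega

lemma eq_root_of_depth_zero {v : T.V} (h : T.depthOf v = 0) : v = T.root := by
  by_contra hv
  rw [T.depthOf_parent v hv] at h
  omega

lemma iterate_root (k : ℕ) : T.parent^[k] T.root = T.root := by
  induction k with
  | zero => rfl
  | succ n ih => rw [Function.iterate_succ_apply, T.parent_root, ih]

lemma depth_iterate : ∀ (k : ℕ) (v u : T.V), T.parent^[k] v = u → u ≠ T.root →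
    T.depthOf v = T.depthOf u + k := by
  intro k
  induction k with
  | zero =>
    intro v u h _
    simp only [Function.iterate_zero, id] at h
    rw [h]
    omega
  | succ n ih =>
    intro v u h hu
    have hv : v ≠ T.root := by
      rintro rfl; rw [iterate_root] at h; exact hu h.symm
    rw [Function.iterate_succ_apply] at h
    have := ih (T.parent v) u h hu
    rw [T.depthOf_parent v hv]
    omega

/-- Bundled hypotheses about the children of the root. -/
structure Ctx (T : GradedTree) (d : ℕ) where
  c : Fin d → T.V
  hd : 1 ≤ d
  hinj : Function.Injective c
  hc : ∀ a, T.parent (c a) = T.root ∧ c a ≠ T.root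
  hsurj : ∀ v, T.parent v = T.root → v ≠ T.root → ∃ a, c a = v

variable {d : ℕ}

lemma depth_c (C : Ctx T d) (a : Fin d) : T.depthOf (C.c a) = 1 := by
  rw [T.depthOf_parent _ (C.hc a).2, (C.hc a).1, T.depthOf_root]

lemma desc_ne_root (C : Ctx T d) {a : Fin d} {v : T.V} (h : T.Desc (C.c a) v) :
    v ≠ T.root := by
  rintro rfl
  obtain ⟨k, hk⟩ := h
  rw [iterate_root] at hk
  exact (C.hc a).2 hk.symm

lemma desc_unique (C : Ctx T d) {a b : Fin d} {v : T.V}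
    (ha : T.Desc (C.c a) v) (hb : T.Desc (C.c b) v) : a = b := by
  obtain ⟨k, hk⟩ := ha
  obtain ⟨j, hj⟩ := hb
  have h1 := depth_iterate k v _ hk (C.hc a).2
  have h2 := depth_iterate j v _ hj (C.hc b).2
  rw [depth_c] at h1 h2
  have : k = j := by omega
  subst this
  exact C.hinj (hk.symm.trans hj)

lemma exists_desc_aux (C : Ctx T d) :
    ∀ n (v : T.V), T.depthOf v ≤ n → v ≠ T.root → ∃ a, T.Desc (C.c a) v := by
  intro n
  induction n with
  | zero =>
    intro v h hv
    exact absurd (eq_root_of_depth_zero (Nat.le_zero.1 h)) hv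
  | succ n ih =>
    intro v hle hv
    by_cases hp : T.parent v = T.root
    · obtain ⟨a, ha⟩ := C.hsurj v hp hv
      exact ⟨a, 0, by simpa using ha.symm⟩
    · have hvd := T.depthOf_parent v hv
      obtain ⟨a, k, hk⟩ := ih (T.parent v) (by omega) hp
      exact ⟨a, k + 1, by rw [Function.iterate_succ_apply]; exact hk⟩

lemma exists_desc (C : Ctx T d) {v : T.V} (hv : v ≠ T.root) :
    ∃ a, T.Desc (C.c a) v :=
  exists_desc_aux C (T.depthOf v) v le_rfl hv

open Classical in
noncomputable def idx (C : Ctx T d) (v : T.V) : Fin d :=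
  if h : ∃ a, T.Desc (C.c a) v then h.choose else ⟨0, C.hd⟩

lemma idx_spec (C : Ctx T d) {v : T.V} (hv : v ≠ T.root) :
    T.Desc (C.c (idx C v)) v := by
  have h := exists_desc C hv
  unfold idx
  rw [dif_pos h]
  exact h.choose_spec

lemma idx_eq (C : Ctx T d) {a : Fin d} {v : T.V} (h : T.Desc (C.c a) v) :
    idx C v = a :=
  desc_unique C (idx_spec C (desc_ne_root C h)) h

lemma idx_c (C : Ctx T d) (a : Fin d) : idx C (C.c a) = a :=
  idx_eq C ⟨0, by simp⟩

lemma idx_parent (C : Ctx T d) {v : T.V} (hv : v ≠ T.root)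
    (hp : T.parent v ≠ T.root) : idx C (T.parent v) = idx C v := by
  obtain ⟨k, hk⟩ := idx_spec C hp
  exact (idx_eq C ⟨k + 1, by rw [Function.iterate_succ_apply]; exact hk⟩).symm

lemma depth_one_eq (C : Ctx T d) {v : T.V} (hv : v ≠ T.root)
    (h1 : T.depthOf v = 1) : v = C.c (idx C v) := by
  obtain ⟨k, hk⟩ := idx_spec C hv
  have := depth_iterate k v _ hk (C.hc _).2
  rw [depth_c, h1] at this
  have hk0 : k = 0 := by omega
  subst hk0
  simpa using hk

end WickProof
namespace WickProof
open GradedTree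

variable {T : GradedTree} {d : ℕ}

/-- The subtree at the `a`-th child. -/
noncomputable def sub (C : Ctx T d) (a : Fin d) : GradedTree :=
  T.subtreeAt (C.c a) (C.hc a).1

/-- The star of two subtrees. -/
noncomputable def St (C : Ctx T d) (a b : Fin d) : GradedTree :=
  (sub C a).star (sub C b)

/-- `v` lies in the union of the two subtrees. -/
def InPair (C : Ctx T d) (a b : Fin d) (v : T.V) : Prop :=
  v = T.root ∨ T.Desc (C.c a) v ∨ T.Desc (C.c b) v

/-- Forgetful map from the star of two subtrees back to `T`. -/
def g (C : Ctx T d) {a b : Fin d} (x : (St C a b).V) : T.V :=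
  match x with
  | Sum.inl w => w.1
  | Sum.inr w => w.1.1

lemma g_root (C : Ctx T d) {a b : Fin d} : g C ((St C a b).root) = T.root := rfl

lemma g_inl (C : Ctx T d) {a b : Fin d} (w : (sub C a).V) :
    g C (Sum.inl w : (St C a b).V) = w.1 := rfl

lemma g_inr (C : Ctx T d) {a b : Fin d} (w : {v : (sub C b).V // v ≠ (sub C b).root}) :
    g C (Sum.inr w : (St C a b).V) = w.1.1 := rfl

lemma g_depth (C : Ctx T d) {a b : Fin d} (x : (St C a b).V) :
    T.depthOf (g C x) = (St C a b).depthOf x := by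
  rcases x with w | w <;> rfl

lemma g_eq_root_iff (C : Ctx T d) {a b : Fin d} {x : (St C a b).V} :
    g C x = T.root ↔ x = (St C a b).root := by
  constructor
  · intro h
    rcases x with w | w
    · exact congrArg Sum.inl (Subtype.ext h)
    · rw [g_inr] at h
      exact absurd (Subtype.ext h) w.2
  · rintro rfl; rfl

lemma g_mem (C : Ctx T d) {a b : Fin d} (x : (St C a b).V) :
    InPair C a b (g C x) := by
  rcases x with w | w
  · rcases w.2 with h | h
    · exact Or.inl h
    · exact Or.inr (Or.inl h)
  · rcases w.1.2 with h | h
    · exact absurd (Subtype.ext h) w.2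
    · exact Or.inr (Or.inr h)

lemma g_inj (C : Ctx T d) {a b : Fin d} (hab : a ≠ b) :
    Function.Injective (g C (a := a) (b := b)) := by
  rintro (w | w) (w' | w') h
  · exact congrArg Sum.inl (Subtype.ext h)
  · exfalso
    rw [g_inl, g_inr] at h
    rcases w'.1.2 with h2 | h2
    · exact w'.2 (Subtype.ext h2)
    · rcases w.2 with h1 | h1
      · exact desc_ne_root C h2 (h ▸ h1)
      · exact hab (desc_unique C (h ▸ h1) h2)
  · exfalso
    rw [g_inl, g_inr] at h
    replace h := h.symm
    rcases w.1.2 with h2 | h2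
    · exact w.2 (Subtype.ext h2)
    · rcases w'.2 with h1 | h1
      · exact desc_ne_root C h2 (h ▸ h1)
      · exact hab (desc_unique C (h ▸ h1) h2)
  · exact congrArg Sum.inr (Subtype.ext (Subtype.ext h))

lemma g_parent (C : Ctx T d) {a b : Fin d} (x : (St C a b).V) :
    g C ((St C a b).parent x) = T.parent (g C x) := by
  rcases x with w | ⟨w, hw⟩
  · rfl
  · show g C (if hp : (sub C b).parent w = (sub C b).root then Sum.inl (sub C a).root
      else Sum.inr ⟨(sub C b).parent w, hp⟩) = T.parent w.1
    split_ifs with hp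
    · have : T.parent w.1 = T.root := congrArg Subtype.val hp
      exact (congrArg (g C (a := a) (b := b)) (dif_pos hp)).trans this.symm
    · exact (congrArg (g C (a := a) (b := b)) (dif_neg hp)).trans rfl

open Classical in
/-- Embedding of the union of two subtrees into their star. -/
noncomputable def embed (C : Ctx T d) (a b : Fin d) (v : T.V) (h : InPair C a b v) :
    (St C a b).V :=
  if hb : T.Desc (C.c b) v then
    Sum.inr ⟨⟨v, Or.inr hb⟩, fun he => desc_ne_root C hb (congrArg Subtype.val he)⟩
  else
    Sum.inl ⟨v, by
      rcases h with h | h | h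
      · exact Or.inl h
      · exact Or.inr h
      · exact absurd h hb⟩

lemma g_embed (C : Ctx T d) {a b : Fin d} {v : T.V} (h : InPair C a b v) :
    g C (embed C a b v h) = v := by
  unfold embed
  split_ifs with hb
  · exact (congrArg (g C (a := a) (b := b)) (dif_pos hb)).trans rfl
  · exact (congrArg (g C (a := a) (b := b)) (dif_neg hb)).trans rfl

lemma embed_g (C : Ctx T d) {a b : Fin d} (hab : a ≠ b) (x : (St C a b).V) :
    embed C a b (g C x) (g_mem C x) = x :=
  g_inj C hab (by rw [g_embed])

lemma embed_root (C : Ctx T d) {a b : Fin d} (hab : a ≠ b) (h : InPair C a b T.root) :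
    embed C a b T.root h = (St C a b).root :=
  g_inj C hab (by rw [g_embed]; rfl)

lemma inPair_parent (C : Ctx T d) {a b : Fin d} {v : T.V} (h : InPair C a b v) :
    InPair C a b (T.parent v) := by
  rcases h with rfl | ⟨k, hk⟩ | ⟨k, hk⟩
  · exact Or.inl T.parent_root
  · cases k with
    | zero =>
      simp only [Function.iterate_zero, id] at hk
      exact Or.inl (by rw [hk, (C.hc a).1])
    | succ n =>
      exact Or.inr (Or.inl ⟨n, by rw [← Function.iterate_succ_apply]; exact hk⟩)
  · cases k with
    | zero =>
      simp only [Function.iterate_zero, id] at hk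
      exact Or.inl (by rw [hk, (C.hc b).1])
    | succ n =>
      exact Or.inr (Or.inr ⟨n, by rw [← Function.iterate_succ_apply]; exact hk⟩)

lemma idx_of_inPair (C : Ctx T d) {a b : Fin d} {v : T.V} (h : InPair C a b v)
    (hv : v ≠ T.root) : idx C v = a ∨ idx C v = b := by
  rcases h with rfl | h | h
  · exact absurd rfl hv
  · exact Or.inl (idx_eq C h)
  · exact Or.inr (idx_eq C h)

lemma inPair_of_idx (C : Ctx T d) {v : T.V} (hv : v ≠ T.root) {a b : Fin d}
    (h : idx C v = a ∨ idx C v = b) : InPair C a b v := by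
  rcases h with h | h
  · exact Or.inr (Or.inl (h ▸ idx_spec C hv))
  · exact Or.inr (Or.inr (h ▸ idx_spec C hv))

/-- If `σ` is a Wick pairing, non-root vertices stay non-root. -/
lemma wick_ne_root {S : GradedTree} {σ : S.V → S.V} (hσ : S.IsWickPairing σ)
    {x : S.V} (hx : x ≠ S.root) : σ x ≠ S.root :=
  fun h => hx (by rw [← hσ.2.1 x, h, hσ.1])

/-- Transfer a Wick pairing of `T` that preserves a pair of subtrees to a Wick
pairing of the star of the two subtrees. -/
lemma transfer (C : Ctx T d) {a b : Fin d} (hab : a ≠ b) (σ : T.V → T.V)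
    (hσ : T.IsWickPairing σ) (hinv : ∀ v, InPair C a b v → InPair C a b (σ v)) :
    (St C a b).IsWickPairing
      (fun x => embed C a b (σ (g C x)) (hinv _ (g_mem C x))) := by
  obtain ⟨h1, h2, h3, h4, h5⟩ := hσ
  refine ⟨?_, ?_, ?_, ?_, ?_⟩
  · apply g_inj C hab
    rw [g_embed, g_root, h1]
  · intro x
    apply g_inj C hab
    rw [g_embed, g_embed, h2]
  · intro x hx hxx
    have hgx : g C x ≠ T.root := fun h => hx ((g_eq_root_iff C).1 h)
    have : σ (g C x) = g C x := by
      conv_rhs => rw [← hxx, g_embed]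
    exact h3 (g C x) hgx this
  · intro x
    rw [← g_depth C, ← g_depth C, g_embed, h4]
  · intro x hx
    have hgx : g C x ≠ T.root := fun h => hx ((g_eq_root_iff C).1 h)
    rcases h5 (g C x) hgx with h | h
    · left
      apply g_inj C hab
      rw [g_parent, g_embed, g_parent, h]
    · right
      apply g_inj C hab
      rw [g_parent, g_embed, h, g_embed, g_parent]

end WickProof
namespace WickProof
open GradedTree

variable {T : GradedTree} {d : ℕ}

noncomputable def key (C : Ctx T d) (m : Equiv.Perm (Fin d)) (v : T.V) : Fin d :=
  if idx C v < m (idx C v) then idx C v else m (idx C v)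

lemma key_lt (C : Ctx T d) (m : Equiv.Perm (Fin d))
    (hm : ∀ a, m a ≠ a ∧ m (m a) = a) (v : T.V) :
    key C m v < m (key C m v) := by
  unfold key
  split_ifs with h
  · exact h
  · rw [(hm (idx C v)).2]
    exact lt_of_le_of_ne (not_lt.1 h) (hm (idx C v)).1

lemma inPair_key (C : Ctx T d) (m : Equiv.Perm (Fin d))
    (hm : ∀ a, m a ≠ a ∧ m (m a) = a) {v : T.V} (hv : v ≠ T.root) :
    InPair C (key C m v) (m (key C m v)) v := by
  have h := idx_spec C hv
  unfold key
  split_ifs with h'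
  · exact Or.inr (Or.inl h)
  · rw [(hm (idx C v)).2]
    exact Or.inr (Or.inr h)

lemma key_eq_of_inPair (C : Ctx T d) (m : Equiv.Perm (Fin d))
    (hm : ∀ a, m a ≠ a ∧ m (m a) = a) {a : Fin d} {v : T.V} (ha : a < m a)
    (h : InPair C a (m a) v) (hv : v ≠ T.root) : key C m v = a := by
  rcases idx_of_inPair C h hv with h' | h' <;> unfold key <;> rw [h']
  · rw [if_pos ha]
  · rw [(hm a).2, if_neg (by simp only [not_lt]; exact le_of_lt ha)]

noncomputable def glue (C : Ctx T d) (m : Equiv.Perm (Fin d))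
    (hm : ∀ a, m a ≠ a ∧ m (m a) = a)
    (τ : ∀ a, a < m a → ((St C a (m a)).V → (St C a (m a)).V)) (v : T.V) : T.V :=
  if hv : v = T.root then T.root
  else g C (τ (key C m v) (key_lt C m hm v)
    (embed C _ _ v (inPair_key C m hm hv)))

lemma glue_root (C : Ctx T d) (m : Equiv.Perm (Fin d))
    (hm : ∀ a, m a ≠ a ∧ m (m a) = a)
    (τ : ∀ a, a < m a → ((St C a (m a)).V → (St C a (m a)).V)) :
    glue C m hm τ T.root = T.root := dif_pos rfl

lemma glue_congr_aux (C : Ctx T d) (m : Equiv.Perm (Fin d))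
    (τ : ∀ a, a < m a → ((St C a (m a)).V → (St C a (m a)).V))
    {a a' : Fin d} (h : a = a') (ha : a < m a) (ha' : a' < m a') {v : T.V}
    (hp : InPair C a (m a) v) (hp' : InPair C a' (m a') v) :
    g C (τ a ha (embed C a (m a) v hp)) = g C (τ a' ha' (embed C a' (m a') v hp')) := by
  subst h; rfl

lemma glue_eq (C : Ctx T d) (m : Equiv.Perm (Fin d))
    (hm : ∀ a, m a ≠ a ∧ m (m a) = a)
    (τ : ∀ a, a < m a → ((St C a (m a)).V → (St C a (m a)).V))
    {a : Fin d} {v : T.V} (ha : a < m a) (hv : v ≠ T.root)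
    (h : InPair C a (m a) v) :
    glue C m hm τ v = g C (τ a ha (embed C a (m a) v h)) := by
  unfold glue
  rw [dif_neg hv]
  exact glue_congr_aux C m τ (key_eq_of_inPair C m hm ha h hv) _ _ _ _

lemma glue_isWick (C : Ctx T d) (m : Equiv.Perm (Fin d))
    (hm : ∀ a, m a ≠ a ∧ m (m a) = a)
    (τ : ∀ a, a < m a → ((St C a (m a)).V → (St C a (m a)).V))
    (hτ : ∀ a ha, (St C a (m a)).IsWickPairing (τ a ha)) :
    T.IsWickPairing (glue C m hm τ) := by
  -- preliminary facts for a fixed non-root v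
  have main : ∀ v : T.V, v ≠ T.root → ∀ a (ha : a < m a) (h : InPair C a (m a) v),
      glue C m hm τ v = g C (τ a ha (embed C a (m a) v h)) ∧
      glue C m hm τ v ≠ T.root := by
    intro v hv a ha h
    refine ⟨glue_eq C m hm τ ha hv h, ?_⟩
    rw [glue_eq C m hm τ ha hv h]
    intro hr
    have hx : embed C a (m a) v h ≠ (St C a (m a)).root := by
      intro he
      exact hv (by rw [← g_embed C h, he, g_root])
    exact wick_ne_root (hτ a ha) hx ((g_eq_root_iff C).1 hr)
  refine ⟨glue_root C m hm τ, ?_, ?_, ?_, ?_⟩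
  · -- involution
    intro v
    rcases eq_or_ne v T.root with rfl | hv
    · rw [glue_root, glue_root]
    · set a := key C m v with ha_def
      have ha : a < m a := key_lt C m hm v
      have h : InPair C a (m a) v := inPair_key C m hm hv
      obtain ⟨he, hne⟩ := main v hv a ha h
      have h' : InPair C a (m a) (glue C m hm τ v) := by rw [he]; exact g_mem C _
      obtain ⟨he2, _⟩ := main _ hne a ha h'
      rw [he2]
      have : embed C a (m a) (glue C m hm τ v) h' = τ a ha (embed C a (m a) v h) := by
        apply g_inj C (ne_of_lt ha)
        rw [g_embed, he]
      rw [this, (hτ a ha).2.1, g_embed]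
  · -- fixed-point free
    intro v hv hvv
    set a := key C m v with ha_def
    have ha : a < m a := key_lt C m hm v
    have h : InPair C a (m a) v := inPair_key C m hm hv
    obtain ⟨he, _⟩ := main v hv a ha h
    rw [he] at hvv
    have hx : embed C a (m a) v h ≠ (St C a (m a)).root := by
      intro hee
      exact hv (by rw [← g_embed C h, hee, g_root])
    have : τ a ha (embed C a (m a) v h) = embed C a (m a) v h := by
      apply g_inj C (ne_of_lt ha)
      rw [g_embed, hvv]
    exact (hτ a ha).2.2.1 _ hx this
  · -- depth preserving
    intro v
    rcases eq_or_ne v T.root with rfl | hv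
    · rw [glue_root]
    · set a := key C m v with ha_def
      have ha : a < m a := key_lt C m hm v
      have h : InPair C a (m a) v := inPair_key C m hm hv
      obtain ⟨he, _⟩ := main v hv a ha h
      rw [he, g_depth C, (hτ a ha).2.2.2.1, ← g_depth C, g_embed]
  · -- parent condition
    intro v hv
    set a := key C m v with ha_def
    have ha : a < m a := key_lt C m hm v
    have h : InPair C a (m a) v := inPair_key C m hm hv
    obtain ⟨he, _⟩ := main v hv a ha h
    have hx : embed C a (m a) v h ≠ (St C a (m a)).root := by
      intro hee
      exact hv (by rw [← g_embed C h, hee, g_root])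
    rcases (hτ a ha).2.2.2.2 _ hx with h6 | h6
    · left
      rw [he, ← g_parent, h6, g_parent, g_embed]
    · right
      have hparent_embed : (St C a (m a)).parent (embed C a (m a) v h) =
          embed C a (m a) (T.parent v) (inPair_parent C h) := by
        apply g_inj C (ne_of_lt ha)
        rw [g_parent, g_embed, g_embed]
      rw [he, ← g_parent, h6, hparent_embed]
      rcases eq_or_ne (T.parent v) T.root with hr | hr
      · have hre : embed C a (m a) (T.parent v) (inPair_parent C h) =
            (St C a (m a)).root := by
          apply g_inj C (ne_of_lt ha)
          rw [g_embed, g_root, hr]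
        rw [hre, (hτ a ha).1, g_root, hr, glue_root]
      · rw [glue_eq C m hm τ ha hr (inPair_parent C h)]

end WickProof
namespace WickProof
open GradedTree

variable {T : GradedTree} {d : ℕ}

lemma inPair_c_left (C : Ctx T d) (a b : Fin d) : InPair C a b (C.c a) :=
  Or.inr (Or.inl ⟨0, by simp⟩)

lemma inPair_c_right (C : Ctx T d) (a b : Fin d) : InPair C a b (C.c b) :=
  Or.inr (Or.inr ⟨0, by simp⟩)

lemma st_depth_one (C : Ctx T d) {a b : Fin d} {x : (St C a b).V}
    (hx : (St C a b).depthOf x = 1) : g C x = C.c a ∨ g C x = C.c b := by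
  have hdx : T.depthOf (g C x) = 1 := by rw [g_depth]; exact hx
  rcases g_mem C x with h | ⟨k, hk⟩ | ⟨k, hk⟩
  · rw [h, T.depthOf_root] at hdx; omega
  · have := depth_iterate k _ _ hk (C.hc a).2
    rw [depth_c, hdx] at this
    have hk0 : k = 0 := by omega
    subst hk0
    exact Or.inl (by simpa using hk)
  · have := depth_iterate k _ _ hk (C.hc b).2
    rw [depth_c, hdx] at this
    have hk0 : k = 0 := by omega
    subst hk0
    exact Or.inr (by simpa using hk)

lemma wick_swap_left (C : Ctx T d) {a b : Fin d} (hab : a ≠ b)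
    {τ : (St C a b).V → (St C a b).V} (hτ : (St C a b).IsWickPairing τ)
    (h : InPair C a b (C.c a)) :
    g C (τ (embed C a b (C.c a) h)) = C.c b := by
  set x := embed C a b (C.c a) h with hx_def
  have hgx : g C x = C.c a := g_embed C h
  have hx : x ≠ (St C a b).root := by
    intro he
    exact (C.hc a).2 (by rw [← hgx, he, g_root])
  have hd : (St C a b).depthOf (τ x) = 1 := by
    rw [hτ.2.2.2.1, ← g_depth C, hgx, depth_c]
  rcases st_depth_one C hd with h1 | h1
  · exfalso
    have : τ x = x := g_inj C hab (by rw [h1, hgx])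
    exact hτ.2.2.1 x hx this
  · exact h1

lemma wick_swap_right (C : Ctx T d) {a b : Fin d} (hab : a ≠ b)
    {τ : (St C a b).V → (St C a b).V} (hτ : (St C a b).IsWickPairing τ)
    (h : InPair C a b (C.c b)) :
    g C (τ (embed C a b (C.c b) h)) = C.c a := by
  set x := embed C a b (C.c b) h with hx_def
  have hgx : g C x = C.c b := g_embed C h
  have hx : x ≠ (St C a b).root := by
    intro he
    exact (C.hc b).2 (by rw [← hgx, he, g_root])
  have hd : (St C a b).depthOf (τ x) = 1 := by
    rw [hτ.2.2.2.1, ← g_depth C, hgx, depth_c]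
  rcases st_depth_one C hd with h1 | h1
  · exact h1
  · exfalso
    have : τ x = x := g_inj C hab (by rw [h1, hgx])
    exact hτ.2.2.1 x hx this

lemma glue_c_fst (C : Ctx T d) (m : Equiv.Perm (Fin d))
    (hm : ∀ a, m a ≠ a ∧ m (m a) = a)
    (τ : ∀ a, a < m a → ((St C a (m a)).V → (St C a (m a)).V))
    (hτ : ∀ a ha, (St C a (m a)).IsWickPairing (τ a ha))
    {a : Fin d} (ha : a < m a) :
    glue C m hm τ (C.c a) = C.c (m a) := by
  rw [glue_eq C m hm τ ha (C.hc a).2 (inPair_c_left C a (m a))]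
  exact wick_swap_left C (ne_of_lt ha) (hτ a ha) _

lemma glue_c_snd (C : Ctx T d) (m : Equiv.Perm (Fin d))
    (hm : ∀ a, m a ≠ a ∧ m (m a) = a)
    (τ : ∀ a, a < m a → ((St C a (m a)).V → (St C a (m a)).V))
    (hτ : ∀ a ha, (St C a (m a)).IsWickPairing (τ a ha))
    {b : Fin d} (hb : b < m b) :
    glue C m hm τ (C.c (m b)) = C.c b := by
  rw [glue_eq C m hm τ hb (C.hc (m b)).2 (inPair_c_right C b (m b))]
  exact wick_swap_right C (ne_of_lt hb) (hτ b hb) _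

lemma glue_c (C : Ctx T d) (m : Equiv.Perm (Fin d))
    (hm : ∀ a, m a ≠ a ∧ m (m a) = a)
    (τ : ∀ a, a < m a → ((St C a (m a)).V → (St C a (m a)).V))
    (hτ : ∀ a ha, (St C a (m a)).IsWickPairing (τ a ha))
    (a : Fin d) : glue C m hm τ (C.c a) = C.c (m a) := by
  rcases lt_or_gt_of_ne (hm a).1.symm with ha | ha
  · exact glue_c_fst C m hm τ hτ ha
  · have hb : m a < m (m a) := by rw [(hm a).2]; exact ha
    have := glue_c_snd C m hm τ hτ hb
    rw [(hm a).2] at this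
    exact this

end WickProof
namespace WickProof
open GradedTree

variable {T : GradedTree} {d : ℕ}

/-- The type of perfect matchings of `Fin d`. -/
abbrev MType (d : ℕ) : Type :=
  {m : Equiv.Perm (Fin d) // ∀ a, m a ≠ a ∧ m (m a) = a}

/-- Data: a matching together with a Wick pairing of the star of each matched pair. -/
noncomputable abbrev Dom (C : Ctx T d) : Type :=
  Σ m : MType d, ∀ p : {a : Fin d // a < m.1 a},
    {τ : (St C p.1 (m.1 p.1)).V → (St C p.1 (m.1 p.1)).V //
      (St C p.1 (m.1 p.1)).IsWickPairing τ}

noncomputable def Glue (C : Ctx T d) (x : Dom C) :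
    {σ : T.V → T.V // T.IsWickPairing σ} :=
  ⟨glue C x.1.1 x.1.2 (fun a ha => (x.2 ⟨a, ha⟩).1),
    glue_isWick C x.1.1 x.1.2 _ (fun a ha => (x.2 ⟨a, ha⟩).2)⟩

lemma Glue_inj (C : Ctx T d) : Function.Injective (Glue C) := by
  rintro ⟨m, τ⟩ ⟨m', τ'⟩ h
  have hfun : glue C m.1 m.2 (fun a ha => (τ ⟨a, ha⟩).1) =
      glue C m'.1 m'.2 (fun a ha => (τ' ⟨a, ha⟩).1) := congrArg Subtype.val h
  have hmm : m = m' := by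
    apply Subtype.ext
    apply Equiv.ext
    intro a
    apply C.hinj
    rw [← glue_c C m.1 m.2 _ (fun a ha => (τ ⟨a, ha⟩).2) a,
      ← glue_c C m'.1 m'.2 _ (fun a ha => (τ' ⟨a, ha⟩).2) a, hfun]
  subst hmm
  suffices hτ : τ = τ' by rw [hτ]
  funext p
  apply Subtype.ext
  funext x
  rcases eq_or_ne x ((St C p.1 (m.1 p.1)).root) with rfl | hx
  · rw [(τ p).2.1, (τ' p).2.1]
  · have hgx : g C x ≠ T.root := fun hh => hx ((g_eq_root_iff C).1 hh)
    have e1 : glue C m.1 m.2 (fun a ha => (τ ⟨a, ha⟩).1) (g C x) =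
        g C ((τ p).1 x) := by
      rw [glue_eq C m.1 m.2 _ p.2 hgx (g_mem C x), embed_g C (ne_of_lt p.2)]
    have e2 : glue C m.1 m.2 (fun a ha => (τ' ⟨a, ha⟩).1) (g C x) =
        g C ((τ' p).1 x) := by
      rw [glue_eq C m.1 m.2 _ p.2 hgx (g_mem C x), embed_g C (ne_of_lt p.2)]
    apply g_inj C (ne_of_lt p.2)
    rw [← e1, ← e2, hfun]

lemma Glue_surj (C : Ctx T d) : Function.Surjective (Glue C) := by
  rintro ⟨σ, hσ⟩
  -- the induced matching on the children
  have hchild : ∀ a, T.parent (σ (C.c a)) = T.root ∧ σ (C.c a) ≠ T.root := by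
    intro a
    constructor
    · rcases hσ.2.2.2.2 (C.c a) (C.hc a).2 with h | h
      · rw [h, (C.hc a).1]
      · rw [h, (C.hc a).1, hσ.1]
    · exact wick_ne_root hσ (C.hc a).2
  choose mf hmf using fun a => C.hsurj (σ (C.c a)) (hchild a).1 (hchild a).2
  have hmm : ∀ a, mf (mf a) = a := fun a => C.hinj (by rw [hmf, hmf, hσ.2.1])
  have hne : ∀ a, mf a ≠ a := by
    intro a h
    exact hσ.2.2.1 (C.c a) (C.hc a).2 (by rw [← hmf, h])
  set m : Equiv.Perm (Fin d) := ⟨mf, mf, fun a => hmm a, fun a => hmm a⟩ with hm_def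
  have hm : ∀ a, m a ≠ a ∧ m (m a) = a := fun a => ⟨hne a, hmm a⟩
  -- invariance of the pair of subtrees
  have hidx : ∀ n (v : T.V), T.depthOf v ≤ n → v ≠ T.root →
      idx C (σ v) = idx C v ∨ idx C (σ v) = mf (idx C v) := by
    intro n
    induction n with
    | zero =>
      intro v hle hv
      exact absurd (eq_root_of_depth_zero (Nat.le_zero.1 hle)) hv
    | succ n ih =>
      intro v hle hv
      have hσv : σ v ≠ T.root := wick_ne_root hσ hv
      by_cases h1 : T.depthOf v = 1
      · right
        have h2 : σ v = C.c (mf (idx C v)) := by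
          rw [hmf]
          exact congrArg σ (depth_one_eq C hv h1)
        rw [h2, idx_c]
      · have hp : T.parent v ≠ T.root := by
          intro hh
          have := T.depthOf_parent v hv
          rw [hh, T.depthOf_root] at this
          omega
        have hdp : T.depthOf (T.parent v) ≤ n := by
          have := T.depthOf_parent v hv
          omega
        have hσp : T.parent (σ v) ≠ T.root := by
          intro hh
          have hd := T.depthOf_parent (σ v) hσv
          rw [hh, T.depthOf_root] at hd
          have h4 := hσ.2.2.2.1 v
          have h5 := T.depthOf_parent v hv
          have h6 := depth_pos hp
          omega
        have e1 : idx C (σ v) = idx C (T.parent (σ v)) :=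
          (idx_parent C hσv hσp).symm
        rcases hσ.2.2.2.2 v hv with h2 | h2
        · left
          rw [e1, h2, idx_parent C hv hp]
        · rcases ih (T.parent v) hdp hp with h3 | h3
          · left
            rw [e1, h2, h3, idx_parent C hv hp]
          · right
            rw [e1, h2, h3, idx_parent C hv hp]
    
  have hinv : ∀ a, ∀ v, InPair C a (m a) v → InPair C a (m a) (σ v) := by
    intro a v hv
    rcases eq_or_ne v T.root with rfl | hv'
    · rw [hσ.1]; exact Or.inl rfl
    · have hσv : σ v ≠ T.root := wick_ne_root hσ hv'
      apply inPair_of_idx C hσv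
      have hma : m a = mf a := rfl
      rcases idx_of_inPair C hv hv' with h | h <;>
        rcases hidx (T.depthOf v) v le_rfl hv' with h2 | h2
      · exact Or.inl (h2.trans h)
      · exact Or.inr (by rw [h2, h, hma])
      · exact Or.inr (h2.trans h)
      · exact Or.inl (by rw [h2, h, hma, hmm])
  refine ⟨⟨⟨m, hm⟩, fun p =>
    ⟨fun x => embed C p.1 (m p.1) (σ (g C x)) (hinv p.1 _ (g_mem C x)),
      transfer C (ne_of_lt p.2) σ hσ (hinv p.1)⟩⟩, ?_⟩
  apply Subtype.ext
  funext v
  show glue C m hm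
    (fun a ha x => embed C a (m a) (σ (g C x)) (hinv a _ (g_mem C x))) v = σ v
  rcases eq_or_ne v T.root with rfl | hv
  · rw [glue_root, hσ.1]
  · rw [glue_eq C m hm _ (key_lt C m hm v) hv (inPair_key C m hm hv)]
    simp only [g_embed]

end WickProof
namespace WickProof

lemma card_sigma' {ι : Type*} [Fintype ι] (f : ι → Type*) [∀ i, Finite (f i)] :
    Nat.card (Σ i, f i) = ∑ i, Nat.card (f i) := by
  classical
  letI : ∀ i, Fintype (f i) := fun i => Fintype.ofFinite _
  rw [Nat.card_eq_fintype_card, Fintype.card_sigma]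
  exact Finset.sum_congr rfl fun i _ => Nat.card_eq_fintype_card.symm

end WickProof


/-- **The Wick pairing count satisfies the state evolution recursion.**
Let `T` be a finite rooted graded tree whose root has `d ≥ 1` children `c 1, …, c d`,
and let `T^{(a)}` be the subtree spanned by the root, the `a`-th child and its
descendants.  Then `Wick(T) = Σ_π ∏_{{a,b} ∈ π} Wick(T^{(a)} ⋆ T^{(b)})`, the sum
running over all perfect matchings `π` of `{1,…,d}` (encoded as fixed-point-free
involutions, each pair counted once via `a < σ a`); in particular `Wick(T) = 0`
when `d` is odd.  This is exactly the statement that the state evolution functional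
`L`, defined recursively via Wick's theorem for Gaussian vectors with covariance
`Σ_{ab} = L(T^{(a)} ⋆ T^{(b)})`, coincides with the Wick pairing count `L(T) = Wick(T)`. -/
theorem wick_eq_sum_matchings (T : GradedTree) (d : ℕ) (hd : 1 ≤ d)
    (c : Fin d → T.V) (hinj : Function.Injective c)
    (hc : ∀ a, T.parent (c a) = T.root ∧ c a ≠ T.root)
    (hsurj : ∀ v : T.V, T.parent v = T.root → v ≠ T.root → ∃ a, c a = v) :
    T.wick =
      ∑ σ ∈ Finset.univ.filter
          (fun σ : Equiv.Perm (Fin d) => ∀ a, σ a ≠ a ∧ σ (σ a) = a),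
        ∏ a ∈ Finset.univ.filter (fun a : Fin d => a < σ a),
          ((T.subtreeAt (c a) (hc a).1).star
            (T.subtreeAt (c (σ a)) (hc (σ a)).1)).wick := by
  set C : WickProof.Ctx T d := ⟨c, hd, hinj, hc, hsurj⟩ with hC
  have h1 : T.wick = Nat.card (WickProof.Dom C) :=
    (Nat.card_eq_of_bijective (WickProof.Glue C)
      ⟨WickProof.Glue_inj C, WickProof.Glue_surj C⟩).symm
  have h2 : Nat.card (WickProof.Dom C) =
      ∑ m : WickProof.MType d, ∏ p : {a : Fin d // a < m.1 a},
        (WickProof.St C p.1 (m.1 p.1)).wick := by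
    refine (WickProof.card_sigma' _).trans ?_
    exact Finset.sum_congr rfl fun m _ => Nat.card_pi
  rw [h1, h2]
  rw [Finset.sum_subtype
    (p := fun σ : Equiv.Perm (Fin d) => ∀ a, σ a ≠ a ∧ σ (σ a) = a)
    (Finset.univ.filter (fun σ : Equiv.Perm (Fin d) => ∀ a, σ a ≠ a ∧ σ (σ a) = a))
    (fun σ => by simp)
    (fun σ => ∏ a ∈ Finset.univ.filter (fun a : Fin d => a < σ a),
      ((T.subtreeAt (c a) (hc a).1).star
        (T.subtreeAt (c (σ a)) (hc (σ a)).1)).wick)]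
  refine Finset.sum_congr rfl fun m _ => ?_
  rw [Finset.prod_subtype
    (p := fun a : Fin d => a < m.1 a)
    (Finset.univ.filter (fun a : Fin d => a < m.1 a))
    (fun a => by simp)
    (fun a => ((T.subtreeAt (c a) (hc a).1).star
      (T.subtreeAt (c (m.1 a)) (hc (m.1 a)).1)).wick)]
  rfl
end
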